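/- arXiv:2501.01512 — 11 statements merged into one kernel-verified Lean document; each statement's English description precedes it below -/
import Mathlib

section
/- Suppose Y is a join semilattice and the Lagrangian L : X × Y → P (with P a totally ordered set containing a distinguished element 0) is monotone in its second argument. Consider sequences (αₙ), (βₙ), (γₙ) produced by the primal-dual procedure: L(αₙ₊₁, βₙ) < 0, L(αₙ₊₁, γₙ₊₁) > 0, and βₙ₊₁ = βₙ ⊔ γₙ₊₁. Then αᵢ ≠ αⱼ for all i < j, and βᵢ ≠ βⱼ for all i ≠ j (in fact βᵢ < βᵢ₊₁ strictly). -/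
/-!
A counter-witness `α (n + 1)` separates `β n` from `γ (n + 1)`: `L (α (n + 1))` is below `z`
at the first and above it at the second, so by monotonicity `γ (n + 1) ≰ β n`. Hence joining
`γ (n + 1)` strictly enlarges `β n`. The same separation rules out reusing `α (i + 1)` at a later
step `j`, because `γ (i + 1) ≤ β (i + 1) ≤ β j`.
-/

theorem Monotone.not_le_of_apply_lt_of_lt_apply {Y P : Type*} [Preorder Y] [Preorder P]
    {f : Y → P} (hf : Monotone f) {b c : Y} {z : P} (hb : f b < z) (hc : z < f c) : ¬c ≤ b :=
  fun hcb => (hc.trans_le (hf hcb)).not_gt hb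

structure IsPrimalDualRun {X Y P : Type*} [SemilatticeSup Y] [Preorder P]
    (L : X → Y → P) (z : P) (α : ℕ → X) (β γ : ℕ → Y) : Prop where
  apply_dual_lt : ∀ n, L (α (n + 1)) (β n) < z
  lt_apply_step : ∀ n, z < L (α (n + 1)) (γ (n + 1))
  dual_succ : ∀ n, β (n + 1) = β n ⊔ γ (n + 1)

namespace IsPrimalDualRun

variable {X Y P : Type*} [SemilatticeSup Y] [Preorder P] {L : X → Y → P} {z : P}
  {α : ℕ → X} {β γ : ℕ → Y}

theorem step_le_dual_succ (h : IsPrimalDualRun L z α β γ) (n : ℕ) : γ (n + 1) ≤ β (n + 1) :=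
  h.dual_succ n ▸ le_sup_right

theorem monotone_dual (h : IsPrimalDualRun L z α β γ) : Monotone β :=
  monotone_nat_of_le_succ fun n => h.dual_succ n ▸ le_sup_left

theorem not_step_le_dual (h : IsPrimalDualRun L z α β γ) (hmono : ∀ x, Monotone (L x))
    {i j : ℕ} (hij : α (i + 1) = α (j + 1)) : ¬γ (i + 1) ≤ β j :=
  (hmono _).not_le_of_apply_lt_of_lt_apply (h.apply_dual_lt j) (hij ▸ h.lt_apply_step i)

theorem dual_lt_dual_succ (h : IsPrimalDualRun L z α β γ) (hmono : ∀ x, Monotone (L x))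
    (n : ℕ) : β n < β (n + 1) := by
  rw [h.dual_succ]
  exact left_lt_sup.2 (h.not_step_le_dual hmono rfl)

theorem strictMono_dual (h : IsPrimalDualRun L z α β γ) (hmono : ∀ x, Monotone (L x)) :
    StrictMono β :=
  strictMono_nat_of_lt_succ (h.dual_lt_dual_succ hmono)

theorem primal_ne (h : IsPrimalDualRun L z α β γ) (hmono : ∀ x, Monotone (L x)) {i j : ℕ}
    (hij : i < j) : α (i + 1) ≠ α (j + 1) :=
  fun he => h.not_step_le_dual hmono he ((h.step_le_dual_succ i).trans (h.monotone_dual hij))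

end IsPrimalDualRun

/-- Progress of the primal-dual procedure: if Y is a join semilattice, L is monotone in
its second argument, and the procedure produces sequences with L(αₙ₊₁,βₙ) < 0,
L(αₙ₊₁,γₙ₊₁) > 0 and βₙ₊₁ = βₙ ⊔ γₙ₊₁, then the α's (from index 1 on) are pairwise
distinct and the β's are strictly increasing, hence pairwise distinct. -/
theorem primal_dual_progress {X Y P : Type*} [SemilatticeSup Y] [LinearOrder P]
    (z : P) (L : X → Y → P)
    (hmono : ∀ (x : X) (y y' : Y), y ≤ y' → L x y ≤ L x y')
    (α : ℕ → X) (β γ : ℕ → Y)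
    (hα : ∀ n, L (α (n + 1)) (β n) < z)
    (hγ : ∀ n, z < L (α (n + 1)) (γ (n + 1)))
    (hβ : ∀ n, β (n + 1) = β n ⊔ γ (n + 1)) :
    (∀ i j, i < j → α (i + 1) ≠ α (j + 1)) ∧
    (∀ n, β n < β (n + 1)) ∧
    (∀ i j, i ≠ j → β i ≠ β j) := by
  have hrun : IsPrimalDualRun L z α β γ := ⟨hα, hγ, hβ⟩
  have hmonoL : ∀ x, Monotone (L x) := fun x _ _ => hmono x _ _
  exact ⟨fun _ _ => hrun.primal_ne hmonoL, hrun.dual_lt_dual_succ hmonoL,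
    fun _ _ => (hrun.strictMono_dual hmonoL).injective.ne⟩
end

section
/- Let L : X × Y → {-1,1} be a Lagrangian where X is a join semilattice with L anti-monotone on X, and Y = ⨄_{n∈ℕ} Yₙ is a stratification with each Yₙ finite. Assume there exists a positive witness β* ∈ Y with inf_x L(x,β*) = 1. If the primal-dual procedure always accumulates α (αₙ₊₁ = αₙ ⊔ δ) and always chooses γ from the smallest possible layer (γ ∈ Y_l with l minimal such that some γ ∈ Y_l satisfies L(α,γ) = 1), then the procedure terminates. -/
/-!
Once `δₙ` has been joined into `α`, anti-monotonicity keeps `L(α, βₙ) = -1` forever, while each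
new dual point `γₘ` has `L(αₘ₊₁, γₘ) = 1`; so no dual point is visited twice. Since `β*` is a
candidate at every step, minimality keeps every `γₘ` in the layers below that of `β*`, a finite
set, which an injective sequence cannot stay in.
-/

section PrimalDual

variable {X Y : Type*} [SemilatticeSup X] {α δ : ℕ → X}

lemma le_of_lt_of_sup_succ (hα : ∀ n, α (n + 1) = α n ⊔ δ n) {n m : ℕ} (h : n < m) :
    δ n ≤ α m :=
  have hmono : Monotone α := monotone_nat_of_le_succ fun k => hα k ▸ le_sup_left
  (hα n ▸ le_sup_right : δ n ≤ α (n + 1)).trans (hmono h)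

lemma injective_dual_of_sup_succ (L : X → Y → ℤ)
    (hanti : ∀ (x x' : X) (y : Y), x ≤ x' → L x' y ≤ L x y) {β γ : ℕ → Y}
    (hδ : ∀ n, L (δ n) (β n) = -1) (hα : ∀ n, α (n + 1) = α n ⊔ δ n)
    (hγ : ∀ n, L (α (n + 1)) (γ n) = 1) (hβ : ∀ n, β (n + 1) = γ n) :
    Function.Injective γ := by
  refine .of_lt_imp_ne fun n m hnm hγnm => ?_
  have hneg : L (α (m + 1)) (γ n) ≤ -1 := by
    rw [← hβ, ← hδ (n + 1)]
    exact hanti _ _ _ (le_of_lt_of_sup_succ hα (by omega))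
  rw [hγnm, hγ m] at hneg
  omega

end PrimalDual

theorem stratified_termination_general {X Y : Type*} [SemilatticeSup X]
    (L : X → Y → ℤ)
    (hanti : ∀ (x x' : X) (y : Y), x ≤ x' → L x' y ≤ L x y)
    (layer : Y → ℕ) (hfin : ∀ n, {y : Y | layer y = n}.Finite)
    (βstar : Y) (hwit : ∀ x, L x βstar = 1)
    (α δ : ℕ → X) (β γ : ℕ → Y)
    (hδ : ∀ n, L (δ n) (β n) = -1)
    (hα : ∀ n, α (n + 1) = α n ⊔ δ n)
    (hγ : ∀ n, L (α (n + 1)) (γ n) = 1)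
    (hmin : ∀ n (y : Y), L (α (n + 1)) y = 1 → layer (γ n) ≤ layer y)
    (hβ : ∀ n, β (n + 1) = γ n) :
    False := by
  have hinj : Function.Injective γ := injective_dual_of_sup_succ L hanti hδ hα hγ hβ
  have hbelow : ∀ n, γ n ∈ layer ⁻¹' Set.Iic (layer βstar) := fun n => hmin n βstar (hwit _)
  have hfinite : (layer ⁻¹' Set.Iic (layer βstar)).Finite :=
    (Set.finite_Iic _).preimage' fun n _ => hfin n
  exact Set.infinite_of_injective_forall_mem hinj hbelow hfinite

/-- Termination via stratification: X a join semilattice, L anti-monotone on X with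
values in {-1,1}, Y stratified into finite layers, and a positive witness β* with
inf_x L(x,β*) = 1. If the procedure accumulates α and chooses γ from the smallest
possible layer, it terminates: there is no infinite run. -/
theorem stratified_termination {X Y : Type*} [SemilatticeSup X]
    (L : X → Y → ℤ) (hval : ∀ x y, L x y = -1 ∨ L x y = 1)
    (hanti : ∀ (x x' : X) (y : Y), x ≤ x' → L x' y ≤ L x y)
    (layer : Y → ℕ) (hfin : ∀ n, {y : Y | layer y = n}.Finite)
    (βstar : Y) (hwit : ∀ x, L x βstar = 1)
    (α δ : ℕ → X) (β γ : ℕ → Y)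
    (hδ : ∀ n, L (δ n) (β n) = -1)
    (hα : ∀ n, α (n + 1) = α n ⊔ δ n)
    (hγ : ∀ n, L (α (n + 1)) (γ n) = 1)
    (hmin : ∀ n (y : Y), L (α (n + 1)) y = 1 → layer (γ n) ≤ layer y)
    (hβ : ∀ n, β (n + 1) = γ n) :
    False :=
  stratified_termination_general L hanti layer hfin βstar hwit α δ β γ hδ hα hγ hmin hβ
end

section
/- Let L : X × Y → {-1,1} be a Lagrangian with Y a join semilattice and L monotone on Y. Let r : Y → ℕ be a join semilattice homomorphism (r(y ⊔ y') = max(r(y), r(y'))), and suppose each level Yₙ = {y : r(y) = n} has no infinite strictly increasing chain. If the primal-dual procedure always sets β ← β ⊔ γ with γ chosen from the smallest possible layer, and there exists a positive witness β* with inf_x L(x,β*) = 1, then the procedure terminates. -/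
/-!
Each step adds a `γ` on which the current `α` is positive while it is negative on `β`; by
monotonicity `γ ≰ β`, so `β` strictly increases. The positive witness `β*` caps the layer of every
`γ`, hence every `β`, since `r` turns joins into maxima. A strictly increasing sequence with
bounded layers eventually stays in its top layer, and that layer has no infinite strictly
increasing chain.
-/

theorem monotone_of_map_sup_eq_max {Y : Type*} [SemilatticeSup Y] {r : Y → ℕ}
    (hr : ∀ y y', r (y ⊔ y') = max (r y) (r y')) : Monotone r := by
  intro y y' hle
  have h := hr y y'
  rw [sup_eq_right.2 hle] at h
  omega

theorem Nat.exists_forall_ge_eq_of_monotone_of_bddAbove {u : ℕ → ℕ} (hu : Monotone u)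
    (hb : BddAbove (Set.range u)) : ∃ N, ∀ n, N ≤ n → u n = u N := by
  obtain ⟨N, hN⟩ := Nat.sSup_mem (Set.range_nonempty u) hb
  refine ⟨N, fun n hn => le_antisymm ?_ (hu hn)⟩
  rw [hN]
  exact le_csSup hb ⟨n, rfl⟩

theorem not_bddAbove_range_comp_of_strictMono {Y : Type*} [Preorder Y] {r : Y → ℕ}
    (hr : Monotone r) (hheight : ∀ n, ¬ ∃ f : ℕ → Y, StrictMono f ∧ ∀ k, r (f k) = n)
    {β : ℕ → Y} (hβ : StrictMono β) : ¬ BddAbove (Set.range (r ∘ β)) := by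
  intro hb
  obtain ⟨N, hN⟩ :=
    Nat.exists_forall_ge_eq_of_monotone_of_bddAbove (hr.comp hβ.monotone) hb
  exact hheight (r (β N))
    ⟨fun k => β (N + k), hβ.comp (strictMono_id.const_add N), fun k => hN _ (N.le_add_right k)⟩

theorem strictMono_of_eq_sup_of_not_le {Y : Type*} [SemilatticeSup Y] {β γ : ℕ → Y}
    (hβ : ∀ n, β (n + 1) = β n ⊔ γ n) (hγ : ∀ n, ¬ γ n ≤ β n) : StrictMono β :=
  strictMono_nat_of_lt_succ fun n => (hβ n).symm ▸ left_lt_sup.2 (hγ n)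

theorem map_le_max_of_eq_sup {Y : Type*} [SemilatticeSup Y] {r : Y → ℕ}
    (hr : ∀ y y', r (y ⊔ y') = max (r y) (r y')) {β γ : ℕ → Y}
    (hβ : ∀ n, β (n + 1) = β n ⊔ γ n) {b : ℕ} (hγ : ∀ n, r (γ n) ≤ b) (n : ℕ) :
    r (β n) ≤ max (r (β 0)) b := by
  induction n with
  | zero => exact le_max_left _ _
  | succ k ih =>
    rw [hβ k, hr]
    exact max_le ih ((hγ k).trans (le_max_right _ _))

theorem stratified_lattice_termination_general {X Y : Type*} [SemilatticeSup Y]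
    (L : X → Y → ℤ)
    (hmono : ∀ (x : X) (y y' : Y), y ≤ y' → L x y ≤ L x y')
    (r : Y → ℕ) (hr : ∀ y y', r (y ⊔ y') = max (r y) (r y'))
    (hheight : ∀ n, ¬ ∃ f : ℕ → Y, StrictMono f ∧ ∀ k, r (f k) = n)
    (βstar : Y) (hwit : ∀ x, L x βstar = 1)
    (α : ℕ → X) (β γ : ℕ → Y)
    (hα : ∀ n, L (α n) (β n) = -1)
    (hγ : ∀ n, L (α n) (γ n) = 1)
    (hmin : ∀ n (y : Y), L (α n) y = 1 → r (γ n) ≤ r y)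
    (hβ : ∀ n, β (n + 1) = β n ⊔ γ n) :
    False := by
  have hγβ : ∀ n, ¬ γ n ≤ β n := fun n hle => by
    have h := hmono (α n) _ _ hle
    rw [hγ n, hα n] at h
    omega
  have hbdd : BddAbove (Set.range (r ∘ β)) := by
    refine ⟨max (r (β 0)) (r βstar), ?_⟩
    rintro _ ⟨n, rfl⟩
    exact map_le_max_of_eq_sup hr hβ (fun k => hmin k βstar (hwit (α k))) n
  exact not_bddAbove_range_comp_of_strictMono (monotone_of_map_sup_eq_max hr) hheight
    (strictMono_of_eq_sup_of_not_le hβ hγβ) hbdd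

/-- Termination with stratification and monotonicity on the same side: Y a join
semilattice, L monotone on Y, r : Y → ℕ a join homomorphism whose layers have no
infinite strictly increasing chains, and a positive witness β*. If β accumulates
(β ← β ⊔ γ) and γ is chosen from the smallest possible layer, the procedure
terminates: there is no infinite run. -/
theorem stratified_lattice_termination {X Y : Type*} [SemilatticeSup Y]
    (L : X → Y → ℤ) (hval : ∀ x y, L x y = -1 ∨ L x y = 1)
    (hmono : ∀ (x : X) (y y' : Y), y ≤ y' → L x y ≤ L x y')
    (r : Y → ℕ) (hr : ∀ y y', r (y ⊔ y') = max (r y) (r y'))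
    (hheight : ∀ n, ¬ ∃ f : ℕ → Y, StrictMono f ∧ ∀ k, r (f k) = n)
    (βstar : Y) (hwit : ∀ x, L x βstar = 1)
    (α : ℕ → X) (β γ : ℕ → Y)
    (hα : ∀ n, L (α n) (β n) = -1)
    (hγ : ∀ n, L (α n) (γ n) = 1)
    (hmin : ∀ n (y : Y), L (α n) y = 1 → r (γ n) ≤ r y)
    (hβ : ∀ n, β (n + 1) = β n ⊔ γ n) :
    False :=
  stratified_lattice_termination_general L hmono r hr hheight βstar hwit α β γ hα hγ hmin hβ
end

section
/- Let T be a transition system. The 'idealized' CEGAR Lagrangian L' over X = finite sequences of states and Y = finite sets of predicates taken from the full powerset of states enjoys strong duality, and its optimal value is 1 if and only if T is safe. In particular: if T is unsafe, a concrete error trace s₀→…→sₙ from an initial state to a bad state satisfies sup_y L'(s₀…sₙ, y) = -1; if T is safe, the set R of reachable states yields a singleton abstraction {R} with inf_x L'(x, {R}) = 1. -/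
open scoped Classical

/-- A transition system. -/
structure TS (S : Type) where
  init : Set S
  tr : S → S → Prop
  bad : Set S

def Reachable {S : Type} (T : TS S) (s : S) : Prop :=
  ∃ s₀ ∈ T.init, Relation.ReflTransGen T.tr s₀ s

def Safe {S : Type} (T : TS S) : Prop :=
  ∀ s, Reachable T s → s ∉ T.bad

/-- Indistinguishability by a finite set of predicates (arbitrary subsets of states). -/
def Indist {S : Type} (A : Finset (Set S)) (s s' : S) : Prop :=
  ∀ p ∈ A, (s ∈ p ↔ s' ∈ p)

/-- [s]_A is an abstract initial state: it contains an initial state. -/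
def AbsInit {S : Type} (T : TS S) (A : Finset (Set S)) (s : S) : Prop :=
  ∃ t, Indist A s t ∧ t ∈ T.init

/-- [s]_A is an abstract bad state: it contains a bad state. -/
def AbsBad {S : Type} (T : TS S) (A : Finset (Set S)) (s : S) : Prop :=
  ∃ t, Indist A s t ∧ t ∈ T.bad

/-- Abstract transition between equivalence classes. -/
def AbsTr {S : Type} (T : TS S) (A : Finset (Set S)) (s s' : S) : Prop :=
  ∃ u v, Indist A s u ∧ Indist A s' v ∧ T.tr u v

/-- The sequence s₀ … sₙ is an abstract error trace in T^A. -/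
def AbsErrTrace {S : Type} (T : TS S) (A : Finset (Set S)) (l : List S) : Prop :=
  ∃ h : l ≠ [], AbsInit T A (l.head h) ∧ AbsBad T A (l.getLast h) ∧
    List.Chain' (AbsTr T A) l

/-- The idealized CEGAR Lagrangian: -1 on abstract error traces, 1 otherwise. -/
noncomputable def Lcegar {S : Type} (T : TS S) (l : List S) (A : Finset (Set S)) : ℤ :=
  if AbsErrTrace T A l then -1 else 1

/-- A concrete error trace of T. -/
def ConcErrTrace {S : Type} (T : TS S) (l : List S) : Prop :=
  ∃ h : l ≠ [], l.head h ∈ T.init ∧ l.getLast h ∈ T.bad ∧ List.Chain' T.tr l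

/-- The set of reachable states of T. -/
def ReachSet {S : Type} (T : TS S) : Set S := {s | Reachable T s}

/-!
The Lagrangian has a saddle point. If `T` is safe, the reachable set is an inductive invariant,
so the abstraction `{ReachSet T}` admits no abstract error trace and `Lcegar` is `1` on that whole
column, its maximum. If `T` is unsafe, a concrete error trace is an abstract error trace for every
abstraction, so `Lcegar` is `-1` on that whole row, its minimum. At a saddle point max-min and
min-max both equal the saddle value.
-/

section SaddlePoint

variable {ι κ α : Type*} [ConditionallyCompleteLattice α]

def IsSaddlePoint (f : ι → κ → α) (i₀ : ι) (j₀ : κ) : Prop :=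
  ∀ i j, f i₀ j ≤ f i₀ j₀ ∧ f i₀ j₀ ≤ f i j₀

variable {f : ι → κ → α} {i₀ : ι} {j₀ : κ}

theorem IsSaddlePoint.ciSup_ciInf_eq (h : IsSaddlePoint f i₀ j₀)
    (hf : ∀ j, BddBelow (Set.range fun i => f i j)) :
    ⨆ j, ⨅ i, f i j = f i₀ j₀ := by
  have : Nonempty ι := ⟨i₀⟩
  have : Nonempty κ := ⟨j₀⟩
  have hle : ∀ j, ⨅ i, f i j ≤ f i₀ j₀ := fun j =>
    (ciInf_le (hf j) i₀).trans (h i₀ j).1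
  have hattained : ⨅ i, f i j₀ = f i₀ j₀ :=
    le_antisymm (hle j₀) (le_ciInf fun i => (h i j₀).2)
  exact le_antisymm (ciSup_le hle) (hattained ▸ le_ciSup ⟨_, Set.forall_mem_range.2 hle⟩ j₀)

theorem IsSaddlePoint.ciInf_ciSup_eq (h : IsSaddlePoint f i₀ j₀)
    (hf : ∀ i, BddAbove (Set.range fun j => f i j)) :
    ⨅ i, ⨆ j, f i j = f i₀ j₀ := by
  have : Nonempty ι := ⟨i₀⟩
  have : Nonempty κ := ⟨j₀⟩
  have hge : ∀ i, f i₀ j₀ ≤ ⨆ j, f i j := fun i =>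
    (h i j₀).2.trans (le_ciSup (hf i) j₀)
  have hattained : ⨆ j, f i₀ j = f i₀ j₀ :=
    le_antisymm (ciSup_le fun j => (h i₀ j).1) (hge i₀)
  exact le_antisymm (hattained ▸ ciInf_le ⟨_, Set.forall_mem_range.2 hge⟩ i₀) (le_ciInf hge)

end SaddlePoint

section Abstraction

variable {S : Type} {T : TS S} {A : Finset (Set S)} {l : List S}

theorem Indist.rfl {s : S} : Indist A s s := fun _ _ => Iff.rfl

theorem Lcegar_le_one : Lcegar T l A ≤ 1 := by
  unfold Lcegar; split <;> omega

theorem neg_one_le_Lcegar : -1 ≤ Lcegar T l A := by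
  unfold Lcegar; split <;> omega

theorem ConcErrTrace.absErrTrace (h : ConcErrTrace T l) (A : Finset (Set S)) :
    AbsErrTrace T A l := by
  obtain ⟨hne, hinit, hbad, hchain⟩ := h
  exact ⟨hne, ⟨_, Indist.rfl, hinit⟩, ⟨_, Indist.rfl, hbad⟩,
    hchain.imp fun a b hab => ⟨a, b, Indist.rfl, Indist.rfl, hab⟩⟩

theorem exists_concErrTrace_of_not_safe (hT : ¬ Safe T) : ∃ l, ConcErrTrace T l := by
  simp only [Safe, not_forall, not_not] at hT
  obtain ⟨s, ⟨s₀, hinit, hreach⟩, hbad⟩ := hT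
  obtain ⟨l, hchain, hlast⟩ := List.exists_isChain_cons_of_relationReflTransGen hreach
  exact ⟨s₀ :: l, List.cons_ne_nil _ _, hinit, hlast ▸ hbad, hchain⟩

structure IsSafeInvariant (T : TS S) (p : Set S) : Prop where
  init_subset : T.init ⊆ p
  mem_of_tr : ∀ ⦃u v⦄, T.tr u v → u ∈ p → v ∈ p
  disjoint_bad : Disjoint p T.bad

theorem isSafeInvariant_reachSet (hT : Safe T) : IsSafeInvariant T (ReachSet T) where
  init_subset s hs := ⟨s, hs, .refl⟩
  mem_of_tr _ _ huv := fun ⟨s₀, hinit, hreach⟩ => ⟨s₀, hinit, hreach.tail huv⟩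
  disjoint_bad := Set.disjoint_left.2 hT

/-- Abstract transitions preserve an inductive invariant among the predicates, since
indistinguishable states agree on it. -/
theorem IsSafeInvariant.not_absErrTrace {p : Set S} (hp : IsSafeInvariant T p) (hpA : p ∈ A) :
    ¬ AbsErrTrace T A l := by
  rintro ⟨hne, ⟨t, hst, ht⟩, ⟨u, hsu, hu⟩, hchain⟩
  have hall : ∀ s ∈ l, s ∈ p := hchain.induction (· ∈ p) l
    (fun _ _ ⟨u, v, hsu, hsv, huv⟩ hs => (hsv p hpA).2 (hp.mem_of_tr huv ((hsu p hpA).1 hs)))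
    (fun _ => (hst p hpA).2 (hp.init_subset ht))
  exact Set.disjoint_left.1 hp.disjoint_bad ((hsu p hpA).1 (hall _ (List.getLast_mem hne))) hu

theorem Lcegar_reachSet (hT : Safe T) (l : List S) : Lcegar T l {ReachSet T} = 1 :=
  if_neg ((isSafeInvariant_reachSet hT).not_absErrTrace (Finset.mem_singleton_self _))

theorem Lcegar_of_concErrTrace (hl : ConcErrTrace T l) (A : Finset (Set S)) :
    Lcegar T l A = -1 :=
  if_pos (hl.absErrTrace A)

theorem exists_isSaddlePoint_Lcegar (T : TS S) :
    ∃ l₀ A₀, IsSaddlePoint (Lcegar T) l₀ A₀ ∧ (Lcegar T l₀ A₀ = 1 ↔ Safe T) := by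
  by_cases hT : Safe T
  · refine ⟨[], {ReachSet T}, fun l A => ?_, iff_of_true (Lcegar_reachSet hT []) hT⟩
    rw [Lcegar_reachSet hT, Lcegar_reachSet hT]
    exact ⟨Lcegar_le_one, le_rfl⟩
  · obtain ⟨l₀, hl₀⟩ := exists_concErrTrace_of_not_safe hT
    refine ⟨l₀, ∅, fun l A => ?_, iff_of_false (by rw [Lcegar_of_concErrTrace hl₀]; omega) hT⟩
    rw [Lcegar_of_concErrTrace hl₀, Lcegar_of_concErrTrace hl₀]
    exact ⟨le_rfl, neg_one_le_Lcegar⟩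

end Abstraction

/-- The idealized CEGAR Lagrangian enjoys strong duality, its optimal value is 1 iff T is
safe; a concrete error trace witnesses primal value -1, and if T is safe the singleton
abstraction by the set of reachable states witnesses dual value 1. -/
theorem cegar_idealized_strong_duality {S : Type} (T : TS S) :
    ((⨆ A : Finset (Set S), ⨅ l : List S, Lcegar T l A) =
        (⨅ l : List S, ⨆ A : Finset (Set S), Lcegar T l A)) ∧
    ((⨆ A : Finset (Set S), ⨅ l : List S, Lcegar T l A) = 1 ↔ Safe T) ∧
    (∀ l : List S, ConcErrTrace T l →
        (⨆ A : Finset (Set S), Lcegar T l A) = -1) ∧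
    (Safe T →
        (⨅ l : List S, Lcegar T l ({ReachSet T} : Finset (Set S))) = 1) := by
  obtain ⟨l₀, A₀, hsaddle, hvalue⟩ := exists_isSaddlePoint_Lcegar T
  have hbddBelow : ∀ A, BddBelow (Set.range fun l => Lcegar T l A) :=
    fun _ => ⟨-1, Set.forall_mem_range.2 fun _ => neg_one_le_Lcegar⟩
  have hbddAbove : ∀ l, BddAbove (Set.range fun A => Lcegar T l A) :=
    fun _ => ⟨1, Set.forall_mem_range.2 fun _ => Lcegar_le_one⟩
  rw [hsaddle.ciSup_ciInf_eq hbddBelow, hsaddle.ciInf_ciSup_eq hbddAbove]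
  refine ⟨rfl, hvalue, fun l hl => ?_, fun hT => ?_⟩
  · simp only [Lcegar_of_concErrTrace hl, ciSup_const]
  · simp only [Lcegar_reachSet hT, ciInf_const]
end

section
/- The idealized ICE Lagrangian enjoys strong duality and its optimal value is 1 iff T is safe: letting X be triples (I', →', B') of finite subsets of the initial states, transitions, and bad states of T, and Y = 𝒫(S) (arbitrary subsets of states as invariant candidates), with L'(S', p) = 1 iff p is a safe inductive invariant for the subsystem S', we have sup_p inf_{S'} L'(S',p) = inf_{S'} sup_p L'(S',p), and this common value is 1 iff T is safe. -/
open scoped Classical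

/-- A finite subsystem of T: finite sets of initial states, transitions and bad states. -/
structure Subsys {S : Type} (T : TS S) where
  init : Finset S
  tr : Finset (S × S)
  bad : Finset S
  init_sub : ↑init ⊆ T.init
  tr_sub : ∀ p ∈ tr, T.tr p.1 p.2
  bad_sub : ↑bad ⊆ T.bad

instance {S : Type} (T : TS S) : Nonempty (Subsys T) :=
  ⟨⟨∅, ∅, ∅, by simp, by simp, by simp⟩⟩

/-- p ⊆ S is a safe inductive invariant for the subsystem S'. -/
def SafeInd {S : Type} {T : TS S} (S' : Subsys T) (p : Set S) : Prop :=
  (↑S'.init ⊆ p) ∧ (∀ q ∈ S'.tr, q.1 ∈ p → q.2 ∈ p) ∧ (∀ s ∈ S'.bad, s ∉ p)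

/-- The idealized ICE Lagrangian: 1 iff p is a safe inductive invariant for S'. -/
noncomputable def Lice {S : Type} {T : TS S} (S' : Subsys T) (p : Set S) : ℤ :=
  if SafeInd S' p then 1 else -1

/-!
A saddle point of the Lagrangian forces strong duality. If T is safe, the set of reachable states
is a safe inductive invariant of every finite subsystem, so it is a column on which `Lice` is
identically 1, its maximum. If T is unsafe, the initial state, the transitions and the bad
state of an error trace form a subsystem admitting no safe inductive invariant, a row on
which `Lice` is identically -1, its minimum.
-/

open Set

section Saddle

variable {ι κ α : Type*} [ConditionallyCompleteLattice α] {f : ι → κ → α}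

theorem ciSup_ciInf_eq_of_saddle (hbelow : ∀ k, BddBelow (range fun i => f i k))
    {i₀ : ι} {k₀ : κ}
    (hrow : ∀ k, f i₀ k ≤ f i₀ k₀) (hcol : ∀ i, f i₀ k₀ ≤ f i k₀) :
    ⨆ k, ⨅ i, f i k = f i₀ k₀ := by
  have : Nonempty ι := ⟨i₀⟩
  have : Nonempty κ := ⟨k₀⟩
  have hinf_le (k : κ) : ⨅ i, f i k ≤ f i₀ k₀ := ciInf_le_of_le (hbelow k) i₀ (hrow k)
  refine le_antisymm (ciSup_le hinf_le) ?_
  exact le_ciSup_of_le ⟨f i₀ k₀, forall_mem_range.2 hinf_le⟩ k₀ (le_ciInf hcol)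

theorem ciInf_ciSup_eq_of_saddle (habove : ∀ i, BddAbove (range (f i))) {i₀ : ι} {k₀ : κ}
    (hrow : ∀ k, f i₀ k ≤ f i₀ k₀) (hcol : ∀ i, f i₀ k₀ ≤ f i k₀) :
    ⨅ i, ⨆ k, f i k = f i₀ k₀ := by
  have : Nonempty ι := ⟨i₀⟩
  have : Nonempty κ := ⟨k₀⟩
  have le_sup (i : ι) : f i₀ k₀ ≤ ⨆ k, f i k := le_ciSup_of_le (habove i) k₀ (hcol i)
  refine le_antisymm ?_ (le_ciInf le_sup)
  exact ciInf_le_of_le ⟨f i₀ k₀, forall_mem_range.2 le_sup⟩ i₀ (ciSup_le hrow)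

end Saddle

theorem Relation.ReflTransGen.exists_finset_mem_of_closed {β : Type*} {r : β → β → Prop}
    {a b : β}
    (h : Relation.ReflTransGen r a b) :
    ∃ E : Finset (β × β), (∀ q ∈ E, r q.1 q.2) ∧
      ∀ p : Set β, a ∈ p → (∀ q ∈ E, q.1 ∈ p → q.2 ∈ p) → b ∈ p := by
  induction h with
  | refl => exact ⟨∅, by simp, fun p ha _ => ha⟩
  | @tail b c _ hbc ih =>
    obtain ⟨E, hE, hreach⟩ := ih
    refine ⟨insert (b, c) E, Finset.forall_mem_insert _ _ _ |>.2 ⟨hbc, hE⟩, ?_⟩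
    intro p ha hclosed
    rw [Finset.forall_mem_insert] at hclosed
    exact hclosed.1 (hreach p ha hclosed.2)

section Lagrangian

variable {S : Type} {T : TS S}

theorem Lice_le_one (S' : Subsys T) (p : Set S) : Lice S' p ≤ 1 := by
  unfold Lice; split <;> norm_num

theorem neg_one_le_Lice (S' : Subsys T) (p : Set S) : -1 ≤ Lice S' p := by
  unfold Lice; split <;> norm_num

theorem Lice_eq_one {S' : Subsys T} {p : Set S} (h : SafeInd S' p) : Lice S' p = 1 := if_pos h

theorem Lice_eq_neg_one {S' : Subsys T} {p : Set S} (h : ¬ SafeInd S' p) : Lice S' p = -1 :=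
  if_neg h

theorem bddAbove_range_Lice (S' : Subsys T) : BddAbove (range (Lice S')) :=
  ⟨1, forall_mem_range.2 (Lice_le_one S')⟩

theorem bddBelow_range_Lice (p : Set S) : BddBelow (range fun S' : Subsys T => Lice S' p) :=
  ⟨-1, forall_mem_range.2 fun S' => neg_one_le_Lice S' p⟩

theorem Safe.safeInd_reachable (hT : Safe T) (S' : Subsys T) : SafeInd S' {s | Reachable T s} :=
  ⟨fun s hs => ⟨s, S'.init_sub hs, .refl⟩,
    fun q hq ⟨s₀, hs₀, hreach⟩ => ⟨s₀, hs₀, hreach.tail (S'.tr_sub q hq)⟩,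
    fun s hs hreach => hT s hreach (S'.bad_sub hs)⟩

theorem exists_subsys_forall_not_safeInd (hT : ¬ Safe T) :
    ∃ S' : Subsys T, ∀ p, ¬ SafeInd S' p := by
  simp only [Safe, not_forall, not_not] at hT
  obtain ⟨s, ⟨s₀, hs₀, hreach⟩, hs⟩ := hT
  obtain ⟨E, hE, hclosed⟩ := hreach.exists_finset_mem_of_closed
  refine ⟨⟨{s₀}, E, {s}, by simpa using hs₀, hE, by simpa using hs⟩, ?_⟩
  rintro p ⟨hinit, htr, hbad⟩
  exact hbad s (Finset.mem_singleton_self s)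
    (hclosed p (hinit (Finset.mem_singleton_self s₀)) htr)

end Lagrangian

/-- The idealized ICE Lagrangian enjoys strong duality and its optimal value is 1 iff T
is safe. -/
theorem ice_idealized_strong_duality {S : Type} (T : TS S) :
    ((⨆ p : Set S, ⨅ S' : Subsys T, Lice S' p) =
        (⨅ S' : Subsys T, ⨆ p : Set S, Lice S' p)) ∧
    ((⨆ p : Set S, ⨅ S' : Subsys T, Lice S' p) = 1 ↔ Safe T) := by
  by_cases hT : Safe T
  · let S₀ : Subsys T := Classical.arbitrary _
    have hR (S' : Subsys T) : Lice S' {s | Reachable T s} = 1 :=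
      Lice_eq_one (hT.safeInd_reachable S')
    have hrow (p : Set S) : Lice S₀ p ≤ Lice S₀ {s | Reachable T s} :=
      (hR S₀).symm ▸ Lice_le_one S₀ p
    have hcol (S' : Subsys T) : Lice S₀ {s | Reachable T s} ≤ Lice S' {s | Reachable T s} := by
      rw [hR, hR]
    rw [ciSup_ciInf_eq_of_saddle bddBelow_range_Lice hrow hcol,
      ciInf_ciSup_eq_of_saddle bddAbove_range_Lice hrow hcol, hR]
    exact ⟨rfl, iff_of_true rfl hT⟩
  · obtain ⟨S₀, hS₀⟩ := exists_subsys_forall_not_safeInd hT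
    have hrow (p : Set S) : Lice S₀ p ≤ Lice S₀ ∅ := by
      rw [Lice_eq_neg_one (hS₀ p), Lice_eq_neg_one (hS₀ ∅)]
    have hcol (S' : Subsys T) : Lice S₀ ∅ ≤ Lice S' ∅ :=
      (Lice_eq_neg_one (hS₀ ∅)).symm ▸ neg_one_le_Lice S' ∅
    rw [ciSup_ciInf_eq_of_saddle bddBelow_range_Lice hrow hcol,
      ciInf_ciSup_eq_of_saddle bddAbove_range_Lice hrow hcol, Lice_eq_neg_one (hS₀ ∅)]
    exact ⟨rfl, iff_of_false (by norm_num) hT⟩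
end

section
/- Let T and T† be induction-dual transition systems. If I† ∋ p₀ →† p₁ →† ⋯ →† pₙ is a path in T† from an initial state, then the union ⋃ᵢ pᵢ (interpreted as the conjunction of all predicates in all pᵢ) is an inductive invariant for T. -/
/-- s satisfies all predicates in the finite set A. -/
def SatSet {S P : Type} (sat : S → P → Prop) (s : S) (A : Finset P) : Prop :=
  ∀ q ∈ A, sat s q

/-!
Initiation is (ID1). For consecution, let `s ⊨ pᵢ` for all `i` and `s → s'`. Then `s' ⊨ p₀` by
(ID2), and (ID4) applied to the edge `pᵢ →† pᵢ₊₁` carries `s' ⊨ pᵢ` to `s' ⊨ pᵢ₊₁`.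
-/

section

variable {S P : Type} (sat : S → P → Prop)

theorem satSet_biUnion_iff {ι : Type} [DecidableEq P] (s : S) (I : Finset ι) (p : ι → Finset P) :
    SatSet sat s (I.biUnion p) ↔ ∀ i ∈ I, SatSet sat s (p i) := by
  simp only [SatSet, Finset.mem_biUnion]
  exact ⟨fun h i hi q hq => h q ⟨i, hi, hq⟩, fun h q ⟨i, hi, hq⟩ => h i hi q hq⟩

theorem satSet_path_of_tr (T : TS S) (Td : TS (Finset P))
    (ID2 : ∀ s : S, ∀ A ∈ Td.init, SatSet sat s A)
    (ID4 : ∀ (s s' : S) (p p' : Finset P), T.tr s s' → Td.tr p p' →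
      SatSet sat s p → SatSet sat s p' → SatSet sat s' p → SatSet sat s' p')
    {n : ℕ} {p : Fin (n + 1) → Finset P} (hp0 : p 0 ∈ Td.init)
    (hstep : ∀ i : Fin n, Td.tr (p i.castSucc) (p i.succ))
    {s s' : S} (htr : T.tr s s') (hs : ∀ i, SatSet sat s (p i)) (i : Fin (n + 1)) :
    SatSet sat s' (p i) := by
  induction i using Fin.induction with
  | zero => exact ID2 s' (p 0) hp0
  | succ j ih => exact ID4 s s' _ _ htr (hstep j) (hs j.castSucc) (hs j.succ) ih

end

theorem path_to_invariant_general {S P : Type} [DecidableEq P]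
    (T : TS S) (Td : TS (Finset P)) (sat : S → P → Prop)
    (ID1 : ∀ s ∈ T.init, ∀ q : P, sat s q)
    (ID2 : ∀ s : S, ∀ A ∈ Td.init, SatSet sat s A)
    (ID4 : ∀ (s s' : S) (p p' : Finset P), T.tr s s' → Td.tr p p' →
      SatSet sat s p → SatSet sat s p' → SatSet sat s' p → SatSet sat s' p')
    (n : ℕ) (p : Fin (n + 1) → Finset P)
    (hp0 : p 0 ∈ Td.init)
    (hstep : ∀ i : Fin n, Td.tr (p i.castSucc) (p i.succ)) :
    (T.init ⊆ {s | SatSet sat s (Finset.univ.biUnion p)}) ∧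
    (∀ s s', SatSet sat s (Finset.univ.biUnion p) → T.tr s s' →
      SatSet sat s' (Finset.univ.biUnion p)) := by
  refine ⟨fun s hs q _ => ID1 s hs q, fun s s' hs htr => ?_⟩
  simp only [satSet_biUnion_iff, Finset.mem_univ, true_implies] at hs ⊢
  exact satSet_path_of_tr sat T Td ID2 ID4 hp0 hstep htr hs

/-- Path-to-invariant lemma for induction-dual transition systems: a path
I† ∋ p₀ →† p₁ →† ⋯ →† pₙ yields that ⋃ᵢ pᵢ is an inductive invariant of T
(initiation and consecution). -/
theorem path_to_invariant {S P : Type} [DecidableEq P]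
    (T : TS S) (Td : TS (Finset P)) (sat : S → P → Prop)
    (ID1 : ∀ s ∈ T.init, ∀ q : P, sat s q)
    (ID2 : ∀ s : S, ∀ A ∈ Td.init, SatSet sat s A)
    (ID3 : ∀ s ∈ T.bad, ∀ A ∈ Td.bad, ¬ SatSet sat s A)
    (ID4 : ∀ (s s' : S) (p p' : Finset P), T.tr s s' → Td.tr p p' →
      SatSet sat s p → SatSet sat s p' → SatSet sat s' p → SatSet sat s' p')
    (n : ℕ) (p : Fin (n + 1) → Finset P)
    (hp0 : p 0 ∈ Td.init)
    (hstep : ∀ i : Fin n, Td.tr (p i.castSucc) (p i.succ)) :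
    (T.init ⊆ {s | SatSet sat s (Finset.univ.biUnion p)}) ∧
    (∀ s s', SatSet sat s (Finset.univ.biUnion p) → T.tr s s' →
      SatSet sat s' (Finset.univ.biUnion p)) :=
  path_to_invariant_general T Td sat ID1 ID2 ID4 n p hp0 hstep
end

section
/- Let T and T† be induction-dual transition systems. Then at least one of the following holds: (a) some set ϑ of predicates is a safe inductive invariant for T, or (b) some set ϖ of states of T is a safe inductive invariant for T†. -/
/-!
The union `ϑ` of all inductive invariants of `T` is again inductive, so it is the largest one.
If it is safe we are done. Otherwise some bad state satisfies all of `ϑ`; it lies in the set `ϖ`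
of states satisfying `ϑ` and, by (ID3), violates every bad predicate-set. A predicate-set holds on
all of `ϖ` exactly when it is contained in `ϑ`, because `ϑ ∪ A` is then inductive; by (ID1) and
(ID4) the same argument shows this containment is preserved by `→†`, so `ϖ` is inductive for `T†`.
-/

variable {S P : Type} (sat : S → P → Prop)

def satStates (ϑ : Set P) : Set S := {s | ∀ q ∈ ϑ, sat s q}

variable {sat}

lemma satStates_union (ϑ A : Set P) :
    satStates sat (ϑ ∪ A) = (satStates sat ϑ ∩ satStates sat A : Set S) := by
  ext s
  simp only [satStates, Set.mem_union, Set.mem_ofPred_eq, Set.mem_inter_iff, or_imp,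
    forall_and]

lemma satStates_antitone : Antitone (satStates sat : Set P → Set S) :=
  fun _ _ h _ hs q hq => hs q (h hq)

namespace TS

variable (T : TS S) (sat)

def IsInductiveInv (ϑ : Set P) : Prop :=
  T.init ⊆ satStates sat ϑ ∧ ∀ s s', s ∈ satStates sat ϑ → T.tr s s' → s' ∈ satStates sat ϑ

def maxInductiveInv : Set P := ⋃₀ {ϑ | T.IsInductiveInv sat ϑ}

variable {T sat}

lemma isInductiveInv_sUnion {Θ : Set (Set P)} (h : ∀ ϑ ∈ Θ, T.IsInductiveInv sat ϑ) :
    T.IsInductiveInv sat (⋃₀ Θ) := by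
  refine ⟨fun s hs q ⟨ϑ, hϑ, hq⟩ => (h ϑ hϑ).1 hs q hq, ?_⟩
  intro s s' hs htr q ⟨ϑ, hϑ, hq⟩
  exact (h ϑ hϑ).2 s s' (satStates_antitone (Set.subset_sUnion_of_mem hϑ) hs) htr q hq

variable (T sat) in
lemma isInductiveInv_maxInductiveInv : T.IsInductiveInv sat (T.maxInductiveInv sat) :=
  isInductiveInv_sUnion fun _ => id

lemma IsInductiveInv.subset_maxInductiveInv {ϑ : Set P} (h : T.IsInductiveInv sat ϑ) :
    ϑ ⊆ T.maxInductiveInv sat :=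
  Set.subset_sUnion_of_mem h

lemma IsInductiveInv.union {ϑ A : Set P} (hϑ : T.IsInductiveInv sat ϑ)
    (hinit : T.init ⊆ satStates sat A)
    (hstep : ∀ s s', s ∈ satStates sat (ϑ ∪ A) → T.tr s s' → s' ∈ satStates sat A) :
    T.IsInductiveInv sat (ϑ ∪ A) := by
  refine ⟨satStates_union ϑ A ▸ Set.subset_inter hϑ.1 hinit, fun s s' hs htr => ?_⟩
  have hsϑ : s ∈ satStates sat ϑ := satStates_antitone Set.subset_union_left hs
  exact satStates_union ϑ A ▸ ⟨hϑ.2 s s' hsϑ htr, hstep s s' hs htr⟩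

lemma subset_maxInductiveInv_iff {A : Set P} :
    A ⊆ T.maxInductiveInv sat ↔
      satStates sat (T.maxInductiveInv sat) ⊆ (satStates sat A : Set S) := by
  have hmax := T.isInductiveInv_maxInductiveInv sat
  refine ⟨fun h => satStates_antitone h, fun h => ?_⟩
  have hunion : T.IsInductiveInv sat (T.maxInductiveInv sat ∪ A) := by
    refine hmax.union (hmax.1.trans h) fun s s' hs htr => h ?_
    exact hmax.2 s s' (satStates_antitone Set.subset_union_left hs) htr
  exact Set.subset_union_right.trans hunion.subset_maxInductiveInv

lemma subset_maxInductiveInv_of_tr (Td : TS (Finset P))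
    (ID1 : ∀ s ∈ T.init, ∀ q : P, sat s q)
    (ID4 : ∀ (s s' : S) (p p' : Finset P), T.tr s s' → Td.tr p p' →
      SatSet sat s p → SatSet sat s p' → SatSet sat s' p → SatSet sat s' p')
    {A A' : Finset P} (htr : Td.tr A A') (hA : ↑A ⊆ T.maxInductiveInv sat) :
    ↑A' ⊆ T.maxInductiveInv sat := by
  have hmax := T.isInductiveInv_maxInductiveInv sat
  have hunion : T.IsInductiveInv sat (T.maxInductiveInv sat ∪ A') := by
    refine hmax.union (fun s hs q _ => ID1 s hs q) fun s s' hs hss' => ?_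
    rw [satStates_union] at hs
    have hs' := hmax.2 s s' hs.1 hss'
    exact ID4 s s' A A' hss' htr (satStates_antitone hA hs.1) hs.2 (satStates_antitone hA hs')
  exact Set.subset_union_right.trans hunion.subset_maxInductiveInv

end TS

/-- Dichotomy for induction-dual transition systems: either some set of predicates is a
safe inductive invariant for T, or some set of states is a safe inductive invariant for
the dual system T†. -/
theorem induction_duality_dichotomy {S P : Type}
    (T : TS S) (Td : TS (Finset P)) (sat : S → P → Prop)
    (ID1 : ∀ s ∈ T.init, ∀ q : P, sat s q)
    (ID2 : ∀ s : S, ∀ A ∈ Td.init, SatSet sat s A)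
    (ID3 : ∀ s ∈ T.bad, ∀ A ∈ Td.bad, ¬ SatSet sat s A)
    (ID4 : ∀ (s s' : S) (p p' : Finset P), T.tr s s' → Td.tr p p' →
      SatSet sat s p → SatSet sat s p' → SatSet sat s' p → SatSet sat s' p') :
    (∃ ϑ : Set P,
      (T.init ⊆ {s | ∀ q ∈ ϑ, sat s q}) ∧
      (∀ s s', (∀ q ∈ ϑ, sat s q) → T.tr s s' → ∀ q ∈ ϑ, sat s' q) ∧
      (∀ s ∈ T.bad, ¬ ∀ q ∈ ϑ, sat s q)) ∨
    (∃ ϖ : Set S,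
      (∀ A ∈ Td.init, ∀ s ∈ ϖ, SatSet sat s A) ∧
      (∀ A A' : Finset P, Td.tr A A' → (∀ s ∈ ϖ, SatSet sat s A) →
        ∀ s ∈ ϖ, SatSet sat s A') ∧
      (∀ A ∈ Td.bad, ∃ s ∈ ϖ, ¬ SatSet sat s A)) := by
  set ϑ := T.maxInductiveInv sat
  have hϑ : T.IsInductiveInv sat ϑ := T.isInductiveInv_maxInductiveInv sat
  by_cases hsafe : ∀ s ∈ T.bad, ¬ ∀ q ∈ ϑ, sat s q
  · exact Or.inl ⟨ϑ, hϑ.1, hϑ.2, hsafe⟩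
  push Not at hsafe
  obtain ⟨b, hb, hbϑ⟩ := hsafe
  refine Or.inr ⟨satStates sat ϑ, fun A hA s _ => ID2 s A hA, ?_,
    fun A hA => ⟨b, hbϑ, ID3 b hb A hA⟩⟩
  intro A A' htr hA
  exact TS.subset_maxInductiveInv_iff.1 <|
    TS.subset_maxInductiveInv_of_tr Td ID1 ID4 htr (TS.subset_maxInductiveInv_iff.2 hA)
end

section
/- For the maximum inductive invariant ϑ ⊆ P of a transition system T (the union of all inductive invariant predicate sets), and ϖ := {s ∈ S : ∀p ∈ ϑ, s ⊨ p}, one has: for every predicate p ∈ P, (∀s ∈ ϖ, s ⊨ p) if and only if p ∈ ϑ. -/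
/-- ϑ ⊆ P is an inductive invariant of T (interpreted conjunctively). -/
def IsInv {S P : Type} (T : TS S) (sat : S → P → Prop) (ϑ : Set P) : Prop :=
  (T.init ⊆ {s | ∀ q ∈ ϑ, sat s q}) ∧
  (∀ s s', (∀ q ∈ ϑ, sat s q) → T.tr s s' → ∀ q ∈ ϑ, sat s' q)

/-- The maximum inductive invariant: the union of all inductive invariants. -/
def MaxInv {S P : Type} (T : TS S) (sat : S → P → Prop) : Set P :=
  ⋃₀ {ϑ : Set P | IsInv T sat ϑ}

section

variable {S P : Type} {T : TS S} {sat : S → P → Prop}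

theorem IsInv.sUnion {Θ : Set (Set P)} (hΘ : ∀ ϑ ∈ Θ, IsInv T sat ϑ) :
    IsInv T sat (⋃₀ Θ) := by
  constructor
  · rintro s hs q ⟨ϑ, hϑ, hq⟩
    exact (hΘ ϑ hϑ).1 hs q hq
  · rintro s s' hs htr q ⟨ϑ, hϑ, hq⟩
    exact (hΘ ϑ hϑ).2 s s' (fun q' hq' => hs q' ⟨ϑ, hϑ, hq'⟩) htr q hq

theorem isInv_maxInv : IsInv T sat (MaxInv T sat) :=
  IsInv.sUnion fun _ hϑ => hϑ

theorem IsInv.subset_maxInv {ϑ : Set P} (hϑ : IsInv T sat ϑ) : ϑ ⊆ MaxInv T sat :=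
  Set.subset_sUnion_of_mem hϑ

theorem IsInv.insert_of_entailed {ϑ : Set P} (hϑ : IsInv T sat ϑ) {p : P}
    (hp : ∀ s, (∀ q ∈ ϑ, sat s q) → sat s p) : IsInv T sat (insert p ϑ) := by
  have hsat : ∀ s, (∀ q ∈ ϑ, sat s q) → ∀ q ∈ insert p ϑ, sat s q := by
    rintro s hs q (rfl | hq)
    exacts [hp s hs, hs q hq]
  constructor
  · exact fun s hs => hsat s (hϑ.1 hs)
  · exact fun s s' hs htr =>
      hsat s' (hϑ.2 s s' (fun q hq => hs q (Set.mem_insert_of_mem p hq)) htr)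

end

/-- For the maximum inductive invariant ϑ and ϖ = {s : ∀ p ∈ ϑ, s ⊨ p}, a predicate is
satisfied by all of ϖ iff it belongs to ϑ. -/
theorem max_invariant_characterization {S P : Type}
    (T : TS S) (sat : S → P → Prop) :
    ∀ p : P,
      (∀ s ∈ {s : S | ∀ q ∈ MaxInv T sat, sat s q}, sat s p) ↔ p ∈ MaxInv T sat := by
  intro p
  constructor
  · intro hp
    exact (isInv_maxInv.insert_of_entailed hp).subset_maxInv (Set.mem_insert p _)
  · exact fun hp s hs => hs p hp
end

section
/- If r : S → ℕ is not a ranking function for the transition system T, then there exists a finite subsystem S' = ({s₀}, {(s₀,s₁),…,(sₙ,sₙ₊₁)}) of T, obtained from a reachable transition sequence I ∋ s₀ → ⋯ → sₙ → sₙ₊₁ with r(sₙ) ≤ r(sₙ₊₁), such that r is not a ranking function for S'. Consequently, if for every finite subsystem S' the function r is a ranking function for S', then T terminates (r is a ranking function for T, and T has no infinite trace). -/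
/-- A transition system without bad states. -/
structure TS2 (S : Type) where
  init : Set S
  tr : S → S → Prop

/-- T terminates: it has no infinite trace from an initial state. -/
def Terminating {S : Type} (T : TS2 S) : Prop :=
  ¬ ∃ f : ℕ → S, f 0 ∈ T.init ∧ ∀ i, T.tr (f i) (f (i + 1))

/-- r is a ranking function (into ℕ) for the subsystem (I', →'). -/
def IsRank {S : Type} (I' : Set S) (tr' : S → S → Prop) (r : S → ℕ) : Prop :=
  ∀ s₀ s s', s₀ ∈ I' → Relation.ReflTransGen tr' s₀ s → tr' s s' → r s' < r s

/-! A reachable transition violating the ranking condition lies at the end of a finite path from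
an initial state, and this path alone is a finite subsystem on which `r` fails. Conversely, along
an infinite trace every prefix is a finite subsystem, so `r` would decrease strictly forever. -/

section Sequences

variable {α : Type*} {R : α → α → Prop}

theorem reflTransGen_of_seq (s : ℕ → α) {n : ℕ}
    (h : ∀ i < n, R (s i) (s (i + 1))) : Relation.ReflTransGen R (s 0) (s n) :=
  (reflTransGen_of_succ_of_le (fun i j => R (s i) (s j))
    (fun i hi => h i hi.2) n.zero_le).lift s fun _ _ => id

theorem exists_seq_of_reflTransGen_of_rel {a b c : α} (hab : Relation.ReflTransGen R a b)
    (hbc : R b c) : ∃ (n : ℕ) (s : ℕ → α), s 0 = a ∧ s n = b ∧ s (n + 1) = c ∧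
      ∀ i ≤ n, R (s i) (s (i + 1)) := by
  induction hab using Relation.ReflTransGen.head_induction_on with
  | refl =>
    refine ⟨0, fun | 0 => b | _ + 1 => c, rfl, rfl, rfl, ?_⟩
    rintro _ hi
    obtain rfl := Nat.le_zero.mp hi
    exact hbc
  | head haa' _ ih =>
    obtain ⟨n, s, rfl, hsn, hsc, hs⟩ := ih
    refine ⟨n + 1, fun | 0 => _ | i + 1 => s i, rfl, hsn, hsc, ?_⟩
    rintro (_ | i) hi
    exacts [haa', hs i (Nat.le_of_succ_le_succ hi)]

def seqRel (s : ℕ → α) (n : ℕ) (a b : α) : Prop :=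
  ∃ i ≤ n, a = s i ∧ b = s (i + 1)

theorem seqRel_iff_mem_image [DecidableEq α] (s : ℕ → α) (n : ℕ) (a b : α) :
    seqRel s n a b ↔ (a, b) ∈ (Finset.range (n + 1)).image fun i => (s i, s (i + 1)) := by
  simp only [seqRel, Finset.mem_image, Finset.mem_range, Nat.lt_succ_iff, Prod.ext_iff,
    eq_comm (a := a), eq_comm (a := b)]

end Sequences

variable {S : Type} {T : TS2 S} {r : S → ℕ}

theorem IsRank.terminating (h : IsRank T.init T.tr r) : Terminating T := by
  rintro ⟨f, hf0, hf⟩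
  obtain ⟨i, hi⟩ := WellFounded.not_rel_apply_succ (r := (· < ·)) (r ∘ f)
  exact hi (h (f 0) (f i) (f (i + 1)) hf0 (reflTransGen_of_seq f fun j _ => hf j) (hf i))

theorem not_isRank_seqRel {s : ℕ → S} {n : ℕ} (hle : r (s n) ≤ r (s (n + 1))) :
    ¬ IsRank {s 0} (seqRel s n) r := fun h =>
  (h (s 0) (s n) (s (n + 1)) rfl
    (reflTransGen_of_seq s fun i hi => ⟨i, hi.le, rfl, rfl⟩) ⟨n, le_rfl, rfl, rfl⟩).not_ge hle

theorem exists_seq_of_not_isRank (h : ¬ IsRank T.init T.tr r) :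
    ∃ (n : ℕ) (s : ℕ → S), s 0 ∈ T.init ∧ (∀ i ≤ n, T.tr (s i) (s (i + 1))) ∧
      r (s n) ≤ r (s (n + 1)) := by
  simp only [IsRank, not_forall, not_lt] at h
  obtain ⟨s₀, a, b, hs₀, hreach, hab, hle⟩ := h
  obtain ⟨n, s, rfl, rfl, rfl, hs⟩ := exists_seq_of_reflTransGen_of_rel hreach hab
  exact ⟨n, s, hs₀, hs, hle⟩

theorem isRank_of_forall_finset
    (h : ∀ (I' : Finset S) (tr' : Finset (S × S)), ↑I' ⊆ T.init → (∀ p ∈ tr', T.tr p.1 p.2) →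
      IsRank ↑I' (fun a b => (a, b) ∈ tr') r) :
    IsRank T.init T.tr r := by
  classical
  by_contra hr
  obtain ⟨n, s, hs₀, hs, hle⟩ := exists_seq_of_not_isRank hr
  refine not_isRank_seqRel hle ?_
  have hfin := h {s 0} ((Finset.range (n + 1)).image fun i => (s i, s (i + 1)))
    (by simpa using hs₀) (by simpa [Nat.lt_succ_iff] using hs)
  simpa only [Finset.coe_singleton, ← seqRel_iff_mem_image] using hfin

/-- If r is not a ranking function for T then there is a finite subsystem, extracted from
a reachable transition sequence violating the ranking condition, on which r fails; and
conversely, if r is a ranking function for every finite subsystem, then T terminates. -/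
theorem ranking_finite_subsystems {S : Type} (T : TS2 S) (r : S → ℕ) :
    (¬ IsRank T.init T.tr r →
      ∃ (n : ℕ) (s : ℕ → S), s 0 ∈ T.init ∧ (∀ i ≤ n, T.tr (s i) (s (i + 1))) ∧
        r (s n) ≤ r (s (n + 1)) ∧
        ¬ IsRank {s 0} (fun a b => ∃ i ≤ n, a = s i ∧ b = s (i + 1)) r) ∧
    ((∀ (I' : Finset S) (tr' : Finset (S × S)), ↑I' ⊆ T.init →
        (∀ p ∈ tr', T.tr p.1 p.2) →
        IsRank ↑I' (fun a b => (a, b) ∈ tr') r) →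
      Terminating T) := by
  refine ⟨fun h => ?_, fun h => (isRank_of_forall_finset h).terminating⟩
  obtain ⟨n, s, hs₀, hs, hle⟩ := exists_seq_of_not_isRank h
  exact ⟨n, s, hs₀, hs, hle, not_isRank_seqRel hle⟩
end

section
/- (Podelski–Rybalchenko, disjunctive well-foundedness) A transition system T is terminating if there exists a disjunctively well-founded relation ≻ (a finite union of well-founded relations) such that for all states, I ∋ s₀ →* s →⁺ s' implies s ≻ s'. -/
open Relation

section Traces

variable {α : Type*} {r : α → α → Prop} {f : ℕ → α}

theorem Relation.reflTransGen_apply_of_le (hf : ∀ n, r (f n) (f (n + 1))) {m n : ℕ}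
    (hmn : m ≤ n) : ReflTransGen r (f m) (f n) :=
  (reflTransGen_of_succ_of_le (fun i j => r (f i) (f j)) (fun i _ => hf i) hmn).lift f
    fun _ _ => id

theorem Relation.transGen_apply_of_lt (hf : ∀ n, r (f n) (f (n + 1))) {m n : ℕ}
    (hmn : m < n) : TransGen r (f m) (f n) :=
  (transGen_of_succ_of_lt (fun i j => r (f i) (f j)) (fun i _ => hf i) hmn).lift f
    fun _ _ => id

end Traces

section DisjunctiveWellFoundedness

variable {ι α : Type*} (r : ι → α → α → Prop)

theorem Finset.exists_subseq_chain_of_forall_lt (s : Finset ι) (f : ℕ → α)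
    (h : ∀ m n, m < n → ∃ i ∈ s, r i (f m) (f n)) :
    ∃ i ∈ s, ∃ g : ℕ ↪o ℕ, ∀ n, r i (f (g n)) (f (g (n + 1))) := by
  classical
  induction s using Finset.induction_on generalizing f with
  | empty =>
    obtain ⟨i, hi, -⟩ := h 0 1 Nat.one_pos
    exact absurd hi (Finset.notMem_empty i)
  | insert i s _ ih =>
    obtain ⟨g, hchain | hnone⟩ := exists_increasing_or_nonincreasing_subseq' (r i) f
    · exact ⟨i, Finset.mem_insert_self i s, g, hchain⟩
    have hs : ∀ m n, m < n → ∃ j ∈ s, r j (f (g m)) (f (g n)) := by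
      intro m n hmn
      obtain ⟨j, hj, hr⟩ := h _ _ (g.strictMono hmn)
      rcases Finset.mem_insert.mp hj with rfl | hj
      · exact absurd hr (hnone m n hmn)
      · exact ⟨j, hj, hr⟩
    obtain ⟨j, hj, g', hg'⟩ := ih (f ∘ g) hs
    exact ⟨j, Finset.mem_insert_of_mem hj, g'.trans g, hg'⟩

theorem not_forall_lt_exists_rel_of_wellFounded [Finite ι]
    (hwf : ∀ i, WellFounded (flip (r i))) (f : ℕ → α) :
    ¬ ∀ m n, m < n → ∃ i, r i (f m) (f n) := by
  intro h
  have := Fintype.ofFinite ι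
  obtain ⟨i, -, g, hg⟩ := Finset.univ.exists_subseq_chain_of_forall_lt r f fun m n hmn =>
    (h m n hmn).imp fun i hi => ⟨Finset.mem_univ i, hi⟩
  exact (wellFounded_iff_isEmpty_descending_chain.mp (hwf i)).elim ⟨fun n => f (g n), hg⟩

end DisjunctiveWellFoundedness

/-- Podelski–Rybalchenko: a transition system is terminating if there is a disjunctively
well-founded relation ≻ (a finite union of well-founded relations) such that
I ∋ s₀ →* s →⁺ s' implies s ≻ s'. -/
theorem podelski_rybalchenko {S : Type} (T : TS2 S)
    (succ : S → S → Prop) (k : ℕ) (rels : Fin k → S → S → Prop)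
    (hwf : ∀ i, WellFounded (fun a b => rels i b a))
    (hunion : ∀ a b, succ a b ↔ ∃ i, rels i a b)
    (hcover : ∀ s₀ s s', s₀ ∈ T.init → Relation.ReflTransGen T.tr s₀ s →
      Relation.TransGen T.tr s s' → succ s s') :
    Terminating T := by
  rintro ⟨f, hf0, hstep⟩
  refine not_forall_lt_exists_rel_of_wellFounded rels hwf f fun m n hmn => (hunion _ _).mp ?_
  exact hcover _ _ _ hf0 (reflTransGen_apply_of_le hstep m.zero_le)
    (transGen_apply_of_lt hstep hmn)
end

section
/- Consequence of monotone DWF: if sup over finite sets R of candidate ranking functions of inf over reachable traces τ = s₀…sₙ of L_T-CEGAR(τ, R) equals 1 — i.e., there exists a finite set R of ranking functions into ℕ such that every reachable trace I ∋ s₀ → ⋯ → sₙ satisfies sᵢ ≻_R sⱼ for all i < j — then the transition system T is terminating. -/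
section

variable {S α : Type*} [Preorder α] [WellQuasiOrderedLE α]

theorem Finset.exists_lt_forall_mem_le_apply (R : Finset (S → α)) (f : ℕ → S) :
    ∃ m n, m < n ∧ ∀ r ∈ R, r (f m) ≤ r (f n) := by
  obtain ⟨m, n, hmn, hle⟩ :=
    (WellQuasiOrderedLE.wqo : WellQuasiOrdered (α := R → α) (· ≤ ·)) fun k r => (r : S → α) (f k)
  exact ⟨m, n, hmn, fun r hr => hle ⟨r, hr⟩⟩

theorem Finset.not_forall_lt_exists_mem_apply_lt (R : Finset (S → α)) (f : ℕ → S) :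
    ¬ ∀ i j, i < j → ∃ r ∈ R, r (f j) < r (f i) := by
  intro hdec
  obtain ⟨m, n, hmn, hle⟩ := R.exists_lt_forall_mem_le_apply f
  obtain ⟨r, hr, hlt⟩ := hdec m n hmn
  exact (hle r hr).not_gt hlt

end

/-- Soundness of the termination CEGAR Lagrangian: if there exists a finite set R of
ranking functions into ℕ such that every reachable trace I ∋ s₀ → ⋯ → sₙ satisfies
sᵢ ≻_R sⱼ for all i < j, then T is terminating. -/
theorem tcegar_sound {S : Type} (T : TS2 S) (R : Finset (S → ℕ))
    (h : ∀ (n : ℕ) (s : ℕ → S), s 0 ∈ T.init → (∀ i < n, T.tr (s i) (s (i + 1))) →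
      ∀ i j, i < j → j ≤ n → ∃ r ∈ R, r (s j) < r (s i)) :
    Terminating T := by
  rintro ⟨f, hf0, hft⟩
  exact R.not_forall_lt_exists_mem_apply_lt f fun i j hij =>
    h j f hf0 (fun k _ => hft k) i j hij le_rfl
end
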